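/- The scalar curvature of the metric g = S(dxⁿ)² + Σ_{a=1}^{n−1}(dxᵃ)² on U satisfies R_g = −S⁻¹·Δ'S + (1/2)·S⁻²·|∇'S|² at every point of U. -/

import Mathlib

open scoped BigOperators

noncomputable section

/-- Points of `ℝⁿ` with `n = m + 1`. -/
abbrev PPPt (m : ℕ) := EuclideanSpace ℝ (Fin (m + 1))

/-- The `i`-th coordinate vector. -/
def ppe (m : ℕ) (i : Fin (m + 1)) : PPPt m := EuclideanSpace.single i 1

/-- Partial derivative `∂f/∂xⁱ` at `x`. -/
def ppd (m : ℕ) (i : Fin (m + 1)) (f : PPPt m → ℝ) (x : PPPt m) : ℝ :=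
  fderiv ℝ f x (ppe m i)

/-- The metric `g`: `g_{nn} = S`, `g_{ab} = δ_{ab}`, `g_{na} = 0`. -/
def ppg (m : ℕ) (S : PPPt m → ℝ) (x : PPPt m) (i j : Fin (m + 1)) : ℝ :=
  if i = Fin.last m ∧ j = Fin.last m then S x else if i = j then 1 else 0

/-- The inverse metric: `g^{nn} = S⁻¹`, `g^{ab} = δ^{ab}`, `g^{na} = 0`. -/
def ppginv (m : ℕ) (S : PPPt m → ℝ) (x : PPPt m) (i j : Fin (m + 1)) : ℝ :=
  if i = Fin.last m ∧ j = Fin.last m then (S x)⁻¹ else if i = j then 1 else 0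

/-- Christoffel symbols `Γ^k_{ij} = (1/2)g^{kl}(∂_i g_{jl} + ∂_j g_{il} − ∂_l g_{ij})`. -/
def ppGamma (m : ℕ) (S : PPPt m → ℝ) (x : PPPt m) (k i j : Fin (m + 1)) : ℝ :=
  (1 / 2) * ∑ l, ppginv m S x k l *
    (ppd m i (fun y => ppg m S y j l) x + ppd m j (fun y => ppg m S y i l) x
      - ppd m l (fun y => ppg m S y i j) x)

/-- Scalar curvature
`R_g = g^{jk}(∂_l Γ^l_{jk} − ∂_j Γ^l_{lk} + Γ^l_{lm}Γ^m_{jk} − Γ^l_{jm}Γ^m_{lk})`. -/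
def ppScal (m : ℕ) (S : PPPt m → ℝ) (x : PPPt m) : ℝ :=
  ∑ j, ∑ k, ppginv m S x j k *
    ((∑ l, ppd m l (fun y => ppGamma m S y l j k) x)
      - (∑ l, ppd m j (fun y => ppGamma m S y l l k) x)
      + (∑ l, ∑ m', ppGamma m S x l l m' * ppGamma m S x m' j k)
      - (∑ l, ∑ m', ppGamma m S x l j m' * ppGamma m S x m' l k))

/-- `Δ'S`: the Euclidean Laplacian of `S` in the first `m` of `m + 1` variables. -/
def ppLap (m : ℕ) (S : PPPt m → ℝ) (x : PPPt m) : ℝ :=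
  ∑ a : Fin m, ppd m a.castSucc (ppd m a.castSucc S) x

/-- `|∇'S|²`: the squared Euclidean gradient of `S` in the first `m` variables. -/
def ppGradSq (m : ℕ) (S : PPPt m → ℝ) (x : PPPt m) : ℝ :=
  ∑ a : Fin m, (ppd m a.castSucc S x) ^ 2

/-- The conjugate momentum tensor `π` of the pp-wave initial data:
`π^{nn} = 0`, `π^{na} = π^{an} = (1/2)S^{−3/2}S_{,a}`, `π^{ab} = −(1/2)S^{−3/2}S_{,n}δ^{ab}`. -/
def ppPi (m : ℕ) (S : PPPt m → ℝ) (x : PPPt m) (i j : Fin (m + 1)) : ℝ :=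
  if i = Fin.last m then
    (if j = Fin.last m then 0 else (1 / 2) * S x ^ (-(3 / 2) : ℝ) * ppd m j S x)
  else if j = Fin.last m then (1 / 2) * S x ^ (-(3 / 2) : ℝ) * ppd m i S x
  else if i = j then -(1 / 2) * S x ^ (-(3 / 2) : ℝ) * ppd m (Fin.last m) S x
  else 0

/-- `tr_g π = g_{ij}π^{ij}`. -/
def ppTrPi (m : ℕ) (S : PPPt m → ℝ) (x : PPPt m) : ℝ :=
  ∑ i, ∑ j, ppg m S x i j * ppPi m S x i j

/-- `|π|²_g = g_{ik}g_{jl}π^{ij}π^{kl}`. -/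
def ppPiNormSq (m : ℕ) (S : PPPt m → ℝ) (x : PPPt m) : ℝ :=
  ∑ i, ∑ j, ∑ k, ∑ l,
    ppg m S x i k * ppg m S x j l * ppPi m S x i j * ppPi m S x k l

/-- `π_{ij} = g_{ik}g_{jl}π^{kl}`. -/
def ppPiLow (m : ℕ) (S : PPPt m → ℝ) (x : PPPt m) (i j : Fin (m + 1)) : ℝ :=
  ∑ k, ∑ l, ppg m S x i k * ppg m S x j l * ppPi m S x k l

/-- Energy density `μ = (1/2)(R_g + (tr_g π)²/(n−1) − |π|²_g)`, `n − 1 = m`. -/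
def ppMu (m : ℕ) (S : PPPt m → ℝ) (x : PPPt m) : ℝ :=
  (1 / 2) * (ppScal m S x + (ppTrPi m S x) ^ 2 / (m : ℝ) - ppPiNormSq m S x)

/-- Current density `J^j = ∂_i π^{ij} + Γ^i_{li}π^{lj} + Γ^j_{li}π^{li}`. -/
def ppJ (m : ℕ) (S : PPPt m → ℝ) (x : PPPt m) (j : Fin (m + 1)) : ℝ :=
  (∑ i, ppd m i (fun y => ppPi m S y i j) x)
    + (∑ l, ∑ i, ppGamma m S x i l i * ppPi m S x l j)
    + (∑ l, ∑ i, ppGamma m S x j l i * ppPi m S x l i)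

/-- `|J|_g = √(g_{ij}J^iJ^j)`. -/
def ppJnorm (m : ℕ) (S : PPPt m → ℝ) (x : PPPt m) : ℝ :=
  Real.sqrt (∑ i, ∑ j, ppg m S x i j * ppJ m S x i * ppJ m S x j)

/-- The shift vector field `X`: `X^n = S⁻¹`, `X^a = 0`. -/
def ppX (m : ℕ) (S : PPPt m → ℝ) (x : PPPt m) (i : Fin (m + 1)) : ℝ :=
  if i = Fin.last m then (S x)⁻¹ else 0

/-- The lapse function `f = (1/2)S^{−1/2}`. -/
def ppf (m : ℕ) (S : PPPt m → ℝ) (x : PPPt m) : ℝ :=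
  (1 / 2) * S x ^ (-(1 / 2) : ℝ)

/-- Lie derivative `(L_X g)_{ij} = X^k ∂_k g_{ij} + g_{kj}∂_i X^k + g_{ik}∂_j X^k`. -/
def ppLXg (m : ℕ) (S : PPPt m → ℝ) (x : PPPt m) (i j : Fin (m + 1)) : ℝ :=
  (∑ k, ppX m S x k * ppd m k (fun y => ppg m S y i j) x)
    + (∑ k, ppg m S x k j * ppd m i (fun y => ppX m S y k) x)
    + (∑ k, ppg m S x i k * ppd m j (fun y => ppX m S y k) x)


section ppAux

variable {m : ℕ} {x : PPPt m} {f g : PPPt m → ℝ} {l : Fin (m+1)} {S : PPPt m → ℝ}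

lemma ppd_const (c : ℝ) : ppd m l (fun _ => c) x = 0 := by
  simp [ppd]

lemma ppd_mul (hf : DifferentiableAt ℝ f x) (hg : DifferentiableAt ℝ g x) :
    ppd m l (fun y => f y * g y) x = ppd m l f x * g x + f x * ppd m l g x := by
  unfold ppd
  rw [fderiv_fun_mul hf hg]
  simp only [ContinuousLinearMap.add_apply, ContinuousLinearMap.smul_apply, smul_eq_mul]
  ring

lemma ppd_const_mul (c : ℝ) (hf : DifferentiableAt ℝ f x) :
    ppd m l (fun y => c * f y) x = c * ppd m l f x := by
  unfold ppd
  rw [fderiv_const_mul hf]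
  simp

lemma ppd_add (hf : DifferentiableAt ℝ f x) (hg : DifferentiableAt ℝ g x) :
    ppd m l (fun y => f y + g y) x = ppd m l f x + ppd m l g x := by
  unfold ppd
  rw [fderiv_fun_add hf hg]; simp

lemma ppd_sub (hf : DifferentiableAt ℝ f x) (hg : DifferentiableAt ℝ g x) :
    ppd m l (fun y => f y - g y) x = ppd m l f x - ppd m l g x := by
  unfold ppd
  rw [fderiv_fun_sub hf hg]; simp

lemma ppd_inv (hf : DifferentiableAt ℝ f x) (h0 : f x ≠ 0) :
    ppd m l (fun y => (f y)⁻¹) x = -(ppd m l f x) / (f x)^2 := by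
  unfold ppd
  have h := ((hasFDerivAt_inv h0).comp x hf.hasFDerivAt).fderiv
  rw [show (fun y => (f y)⁻¹) = Inv.inv ∘ f from rfl, h]
  simp [ppd]
  ring

lemma ppd_ppg (i j l : Fin (m+1)) :
    ppd m i (fun y => ppg m S y j l) x
      = if j = Fin.last m ∧ l = Fin.last m then ppd m i S x else 0 := by
  by_cases h : j = Fin.last m ∧ l = Fin.last m
  · simp [ppg, h]
  · simp only [if_neg h]
    have : (fun y => ppg m S y j l) = fun _ => (if j = l then (1:ℝ) else 0) := by
      funext y; simp [ppg, h]
    rw [this, ppd_const]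

lemma ppginv_diag (k l : Fin (m+1)) :
    ppginv m S x k l = if k = l then (if k = Fin.last m then (S x)⁻¹ else 1) else 0 := by
  unfold ppginv
  by_cases h1 : k = l
  · subst h1
    by_cases h2 : k = Fin.last m <;> simp [h2]
  · have : ¬ (k = Fin.last m ∧ l = Fin.last m) := by
      rintro ⟨rfl, rfl⟩; exact h1 rfl
    simp [this, h1]

lemma ppGamma_eq (k i j : Fin (m+1)) :
    ppGamma m S x k i j = (1/2) * (if k = Fin.last m then (S x)⁻¹ else 1) *
      ((if j = Fin.last m ∧ k = Fin.last m then ppd m i S x else 0)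
        + (if i = Fin.last m ∧ k = Fin.last m then ppd m j S x else 0)
        - (if i = Fin.last m ∧ j = Fin.last m then ppd m k S x else 0)) := by
  unfold ppGamma
  simp only [ppd_ppg, ppginv_diag]
  rw [Finset.sum_eq_single k]
  · simp only [eq_self_iff_true, if_true]; ring
  · intro b _ hb; simp [Ne.symm hb]
  · intro h; simp at h

lemma ppd_ppGamma (hdS : DifferentiableAt ℝ S x) (hS0 : S x ≠ 0)
    (hdp : ∀ i, DifferentiableAt ℝ (fun y => ppd m i S y) x) (l k i j : Fin (m+1)) :
    ppd m l (fun y => ppGamma m S y k i j) x =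
    (1/2) * ((if k = Fin.last m then -(ppd m l S x)/(S x)^2 else 0) *
      ((if j = Fin.last m ∧ k = Fin.last m then ppd m i S x else 0)
        + (if i = Fin.last m ∧ k = Fin.last m then ppd m j S x else 0)
        - (if i = Fin.last m ∧ j = Fin.last m then ppd m k S x else 0))
    + (if k = Fin.last m then (S x)⁻¹ else 1) *
      ((if j = Fin.last m ∧ k = Fin.last m then ppd m l (fun y => ppd m i S y) x else 0)
        + (if i = Fin.last m ∧ k = Fin.last m then ppd m l (fun y => ppd m j S y) x else 0)
        - (if i = Fin.last m ∧ j = Fin.last m then ppd m l (fun y => ppd m k S y) x else 0))) := by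
  have hfun : (fun y => ppGamma m S y k i j) = fun y => (1/2) *
      ((if k = Fin.last m then (S y)⁻¹ else 1) *
        ((if j = Fin.last m ∧ k = Fin.last m then (1:ℝ) else 0) * ppd m i S y
          + (if i = Fin.last m ∧ k = Fin.last m then (1:ℝ) else 0) * ppd m j S y
          - (if i = Fin.last m ∧ j = Fin.last m then (1:ℝ) else 0) * ppd m k S y)) := by
    funext y
    rw [ppGamma_eq]
    split_ifs <;> ring
  have hB : DifferentiableAt ℝ (fun y =>
      (if j = Fin.last m ∧ k = Fin.last m then (1:ℝ) else 0) * ppd m i S y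
        + (if i = Fin.last m ∧ k = Fin.last m then (1:ℝ) else 0) * ppd m j S y
        - (if i = Fin.last m ∧ j = Fin.last m then (1:ℝ) else 0) * ppd m k S y) x :=
    (((hdp i).const_mul _).add ((hdp j).const_mul _)).sub ((hdp k).const_mul _)
  have hBd : ppd m l (fun y =>
      (if j = Fin.last m ∧ k = Fin.last m then (1:ℝ) else 0) * ppd m i S y
        + (if i = Fin.last m ∧ k = Fin.last m then (1:ℝ) else 0) * ppd m j S y
        - (if i = Fin.last m ∧ j = Fin.last m then (1:ℝ) else 0) * ppd m k S y) x
      = (if j = Fin.last m ∧ k = Fin.last m then (1:ℝ) else 0) * ppd m l (fun y => ppd m i S y) x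
        + (if i = Fin.last m ∧ k = Fin.last m then (1:ℝ) else 0) * ppd m l (fun y => ppd m j S y) x
        - (if i = Fin.last m ∧ j = Fin.last m then (1:ℝ) else 0) * ppd m l (fun y => ppd m k S y) x := by
    rw [ppd_sub (((hdp i).const_mul _).fun_add ((hdp j).const_mul _)) ((hdp k).const_mul _),
      ppd_add ((hdp i).const_mul _) ((hdp j).const_mul _),
      ppd_const_mul _ (hdp i), ppd_const_mul _ (hdp j), ppd_const_mul _ (hdp k)]
  by_cases hk : k = Fin.last m
  · simp only [hfun, if_pos hk]
    rw [ppd_const_mul _ ((hdS.fun_inv hS0).fun_mul hB),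
      ppd_mul (hdS.fun_inv hS0) hB, ppd_inv hdS hS0, hBd]
    split_ifs <;> ring
  · simp only [hfun, if_neg hk, one_mul]
    rw [ppd_const_mul _ hB, hBd]
    split_ifs <;> ring

lemma ppKeyalg {m : ℕ} (s pn qnn : ℝ) (P Q : Fin m → ℝ) :
    (∑ a, (-(1/2 * (-P a / s^2 * P a + s⁻¹ * Q a)) - 1/2 * s⁻¹ * P a * (1/2 * s⁻¹ * P a)))
    + s⁻¹ * ((∑ a, -(1/2 * Q a))
        + 1/2 * (-pn / s^2 * (pn + pn - pn) + s⁻¹ * (qnn + qnn - qnn))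
        - 1/2 * (-pn / s^2 * (pn + pn - pn) + s⁻¹ * (qnn + qnn - qnn))
        + ((∑ a, -(1/2 * s⁻¹ * P a * (1/2 * P a)))
            + 1/2 * s⁻¹ * (pn + pn - pn) * (1/2 * s⁻¹ * (pn + pn - pn)))
        - ((∑ a, -(1/2 * P a) * (1/2 * s⁻¹ * P a))
            + ((∑ a, -(1/2 * s⁻¹ * P a * (1/2 * P a)))
              + 1/2 * s⁻¹ * (pn + pn - pn) * (1/2 * s⁻¹ * (pn + pn - pn)))))
    = -s⁻¹ * (∑ a, Q a) + 1/2 * s⁻¹^2 * (∑ a, P a ^ 2) := by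
  have h1 : (∑ a, (-(1/2 * (-P a / s^2 * P a + s⁻¹ * Q a)) - 1/2 * s⁻¹ * P a * (1/2 * s⁻¹ * P a)))
      = (1/4 * s⁻¹^2) * (∑ a, P a ^ 2) + (-(1/2) * s⁻¹) * (∑ a, Q a) := by
    rw [Finset.mul_sum, Finset.mul_sum, ← Finset.sum_add_distrib]
    refine Finset.sum_congr rfl fun a _ => ?_
    field_simp
    ring
  have h2 : (∑ a, -(1/2 * Q a)) = (-(1/2)) * (∑ a, Q a) := by
    rw [Finset.mul_sum]; exact Finset.sum_congr rfl fun a _ => by ring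
  have h3 : (∑ a, -(1/2 * s⁻¹ * P a * (1/2 * P a))) = (-(1/4) * s⁻¹) * (∑ a, P a ^ 2) := by
    rw [Finset.mul_sum]; exact Finset.sum_congr rfl fun a _ => by ring
  have h4 : (∑ a, -(1/2 * P a) * (1/2 * s⁻¹ * P a)) = (-(1/4) * s⁻¹) * (∑ a, P a ^ 2) := by
    rw [Finset.mul_sum]; exact Finset.sum_congr rfl fun a _ => by ring
  rw [h1, h2, h3, h4]
  ring

end ppAux

/-- the scalar curvature of `g = S(dxⁿ)² + Σ(dxᵃ)²` is
`R_g = −S⁻¹Δ'S + (1/2)S⁻²|∇'S|²` at every point of `U`. -/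
theorem ppWave_scalarCurvature (m : ℕ) (hm : 1 ≤ m) (U : Set (PPPt m)) (hU : IsOpen U)
    (S : PPPt m → ℝ) (hS : ContDiffOn ℝ (⊤ : ℕ∞) S U) (hpos : ∀ x ∈ U, 0 < S x) :
    ∀ x ∈ U, ppScal m S x
      = -(S x)⁻¹ * ppLap m S x + (1 / 2) * ((S x)⁻¹) ^ 2 * ppGradSq m S x := by
  intro x hx
  have hCx : ContDiffAt ℝ (⊤ : ℕ∞) S x := hS.contDiffAt (hU.mem_nhds hx)
  have hdS : DifferentiableAt ℝ S x := hCx.differentiableAt (by simp)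
  have hS0 : S x ≠ 0 := (hpos x hx).ne'
  have hdp : ∀ i, DifferentiableAt ℝ (fun y => ppd m i S y) x := by
    intro i
    have h1 : ContDiffAt ℝ (⊤ : ℕ∞) (fderiv ℝ S) x := hCx.fderiv_right (by simp)
    have h2 : ContDiffAt ℝ (⊤ : ℕ∞) (fun y => (fderiv ℝ S y) (ppe m i)) x :=
      h1.clm_apply contDiffAt_const
    exact h2.differentiableAt (by simp)
  have hne : ∀ a : Fin m, (Fin.castSucc a = Fin.last m) = False :=
    fun a => eq_false (Fin.castSucc_lt_last a).ne
  unfold ppScal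
  simp only [ppginv_diag]
  rw [Finset.sum_congr rfl (fun j _ => Finset.sum_eq_single j
    (fun b _ hb => by simp [Ne.symm hb]) (fun h => by simp at h))]
  simp only [eq_self_iff_true, if_true]
  simp only [ppd_ppGamma hdS hS0 hdp]
  simp only [ppGamma_eq]
  simp only [Fin.sum_univ_castSucc, hne, and_false, false_and, and_true, true_and,
    if_true, if_false, eq_self_iff_true, mul_zero, zero_mul, mul_one, one_mul,
    add_zero, zero_add, sub_zero, zero_sub, mul_neg, neg_zero, ite_self]
  simp only [Finset.sum_const_zero, add_zero, zero_add, zero_sub, sub_zero]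
  unfold ppLap ppGradSq
  exact ppKeyalg (S x) (ppd m (Fin.last m) S x)
    (ppd m (Fin.last m) (fun y => ppd m (Fin.last m) S y) x)
    (fun a => ppd m a.castSucc S x)
    (fun a => ppd m a.castSucc (fun y => ppd m a.castSucc S y) x)


end
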